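/- Let T be a lexicographically ordered ω₁-tree, L ⊆ 𝓑(T), and U = ⋃L. Assume that for every t ∈ U the set {c ∈ L : t ∈ c} has cardinality at least ℵ₂. If b ∈ L is not a local end point of U, then for every α < ω₁ there exist b₀, b₁ ∈ L, neither of which is a local end point of U, such that b₀ <lex b <lex b₁, Δ(b₀, b) > α, and Δ(b₁, b) > α. -/

import Mathlib

noncomputable section

open Cardinal Set

def omega1 : Ordinal := (Cardinal.aleph 1).ord

def omega2 : Ordinal := (Cardinal.aleph 2).ord

/-- The height of an element `t`: the order type of its set of strict predecessors. -/
def htOf {X : Type} (lt : X → X → Prop)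
    (wo : ∀ t : X, IsWellOrder {s : X // lt s t} fun a b => lt a.1 b.1) (t : X) : Ordinal :=
  @Ordinal.type {s : X // lt s t} (fun a b => lt a.1 b.1) (wo t)

/-- A lexicographically ordered (normal) `ω₁`-tree. -/
structure LexOmega1Tree where
  T : Type
  lt : T → T → Prop
  lt_irrefl : ∀ a : T, ¬ lt a a
  lt_trans : ∀ {a b c : T}, lt a b → lt b c → lt a c
  /-- the strict predecessors of any element are well-ordered -/
  predWO : ∀ t : T, IsWellOrder {s : T // lt s t} fun a b => lt a.1 b.1
  /-- every level is countable -/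
  level_countable : ∀ α : Ordinal, {t : T | htOf lt predWO t = α}.Countable
  /-- levels are nonempty exactly below `ω₁` -/
  level_nonempty : ∀ α : Ordinal, (∃ t : T, htOf lt predWO t = α) ↔ α < omega1
  /-- normality: distinct elements of the same limit height have different predecessors -/
  normal : ∀ s t : T, htOf lt predWO s = htOf lt predWO t →
    Order.IsSuccLimit (htOf lt predWO s) → (∀ u : T, lt u s ↔ lt u t) → s = t
  /-- the lexicographic comparison of distinct elements of equal height -/
  lexlt : T → T → Prop
  lexlt_same : ∀ a b : T, lexlt a b → htOf lt predWO a = htOf lt predWO b ∧ a ≠ b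
  lexlt_tricho : ∀ a b : T, htOf lt predWO a = htOf lt predWO b → a ≠ b →
    lexlt a b ∨ lexlt b a
  lexlt_asymm : ∀ a b : T, lexlt a b → ¬ lexlt b a
  lexlt_trans : ∀ {a b c : T}, lexlt a b → lexlt b c → lexlt a c
  /-- coherence: the lexicographic comparison is decided at the splitting level -/
  lexlt_coh : ∀ a b a' b' : T, lexlt a b → lt a a' → lt b b' →
    htOf lt predWO a' = htOf lt predWO b' → lexlt a' b'

namespace LexOmega1Tree

variable (S : LexOmega1Tree)

def ht : S.T → Ordinal := htOf S.lt S.predWO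

def le (a b : S.T) : Prop := S.lt a b ∨ a = b

/-- a cofinal branch : a downward closed chain meeting every level -/
def IsBranch (b : Set S.T) : Prop :=
  (∀ s t : S.T, t ∈ b → S.lt s t → s ∈ b) ∧
  (∀ s t : S.T, s ∈ b → t ∈ b → s = t ∨ S.lt s t ∨ S.lt t s) ∧
  (∀ α : Ordinal, α < omega1 → ∃ t ∈ b, S.ht t = α)

/-- the set `𝓑(T)` of cofinal branches -/
def Branch : Type := {b : Set S.T // S.IsBranch b}

/-- the lexicographic order on branches (and on arbitrary sets of nodes) -/
def blex (A B : Set S.T) : Prop := ∃ a ∈ A, ∃ b ∈ B, S.lexlt a b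

/-- the order topology on `(𝓑(T), <lex)`, generated by the open rays -/
def branchTop : TopologicalSpace S.Branch :=
  TopologicalSpace.generateFrom
    {s : Set S.Branch | ∃ a : S.Branch, s = {x | S.blex a.1 x.1} ∨ s = {x | S.blex x.1 a.1}}

/-- `b` is a local right end point of the downward closed subtree `W` -/
def IsLocalRightEP (W b : Set S.T) : Prop :=
  ∃ t ∈ b, ∀ s ∈ b, S.ht t ≤ S.ht s →
    ∀ u ∈ W, S.ht u = S.ht s → S.le t u → u = s ∨ S.lexlt u s

/-- `b` is a local left end point of the downward closed subtree `W` -/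
def IsLocalLeftEP (W b : Set S.T) : Prop :=
  ∃ t ∈ b, ∀ s ∈ b, S.ht t ≤ S.ht s →
    ∀ u ∈ W, S.ht u = S.ht s → S.le t u → u = s ∨ S.lexlt s u

def IsLocalEP (W b : Set S.T) : Prop := S.IsLocalRightEP W b ∨ S.IsLocalLeftEP W b

end LexOmega1Tree

/-!
Since `b` is not a local right end point of `U`, above `b(α)` there is a node `u ∈ U` lying
lexicographically to the right of `b`; every branch of `L` through `u` is then `>lex b` and
agrees with `b` up to `α`. A local end point is determined by its side and by a node above which
it is extremal, so `U` has at most `|T| ≤ ℵ₁` local end points, while at least `ℵ₂` branches of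
`L` pass through `u`. The left side is symmetric.
-/

namespace LexOmega1Tree

variable {S : LexOmega1Tree}

theorem ht_lt_of_lt {s u : S.T} (h : S.lt s u) : S.ht s < S.ht u := by
  have := S.predWO s
  have := S.predWO u
  exact PrincipalSeg.ordinal_type_lt
    { toFun := fun x => ⟨x.1, S.lt_trans x.2 h⟩
      inj' := fun x y hxy => Subtype.ext (congrArg (fun z : {x // S.lt x u} => z.1) hxy)
      map_rel_iff' := Iff.rfl
      top := ⟨s, h⟩
      mem_range_iff_rel' := fun y =>
        ⟨by rintro ⟨x, rfl⟩; exact x.2, fun hy => ⟨⟨y.1, hy⟩, rfl⟩⟩ }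

theorem ht_lt_omega1 (t : S.T) : S.ht t < omega1 :=
  (S.level_nonempty (S.ht t)).mp ⟨t, rfl⟩

theorem mk_T_le_aleph_one : #S.T ≤ aleph 1 := by
  have hfib : ∀ β : Iio omega1,
      lift.{1} #((fun t => (⟨S.ht t, ht_lt_omega1 t⟩ : Iio omega1)) ⁻¹' {β}) ≤ ℵ₀ := by
    rintro ⟨β, -⟩
    have : {t : S.T | S.ht t = β}.Countable := S.level_countable β
    rw [lift_le_aleph0]
    convert le_aleph0_iff_set_countable.mpr this using 3
    ext t
    simp only [mem_preimage, mem_singleton_iff, Subtype.ext_iff, mem_ofPred_eq]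
  have h := lift_mk_le_lift_mk_mul_of_lift_mk_preimage_le _ hfib
  rwa [mk_Iio_ordinal, omega1, card_ord, lift_lift, ← lift_aleph0.{1, 0}, ← lift_mul,
    aleph_mul_aleph0, lift_le] at h

namespace IsBranch

variable {c d : Set S.T}

theorem eq_of_ht_eq (hc : S.IsBranch c) {s u : S.T} (hs : s ∈ c) (hu : u ∈ c)
    (h : S.ht s = S.ht u) : s = u := by
  rcases hc.2.1 s u hs hu with h' | h' | h'
  · exact h'
  · exact absurd h (ht_lt_of_lt h').ne
  · exact absurd h (ht_lt_of_lt h').ne'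

theorem le_of_ht_le (hc : S.IsBranch c) {t s : S.T} (ht : t ∈ c) (hs : s ∈ c)
    (h : S.ht t ≤ S.ht s) : S.le t s := by
  rcases hc.2.1 t s ht hs with h' | h' | h'
  · exact Or.inr h'
  · exact Or.inl h'
  · exact absurd (ht_lt_of_lt h') h.not_gt

theorem mem_of_le (hc : S.IsBranch c) {t u : S.T} (h : S.le t u) (hu : u ∈ c) : t ∈ c := by
  rcases h with h | rfl
  · exact hc.1 t u hu h
  · exact hu

theorem agree_of_mem (hc : S.IsBranch c) (hd : S.IsBranch d) {t : S.T} (htc : t ∈ c)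
    (htd : t ∈ d) :
    ∀ β ≤ S.ht t, ∀ s ∈ c, ∀ u ∈ d, S.ht s = β → S.ht u = β → s = u := by
  rintro β hβ s hs u hu rfl hus
  have hsd : s ∈ d := hd.mem_of_le (hc.le_of_ht_le hs htc hβ) htd
  exact hd.eq_of_ht_eq hsd hu hus.symm

theorem eq_of_forall_ht_eq (hc : S.IsBranch c) (hd : S.IsBranch d)
    (h : ∀ s ∈ c, ∀ u ∈ d, S.ht s = S.ht u → s = u) : c = d := by
  have sub : ∀ {c d : Set S.T}, S.IsBranch d →
      (∀ s ∈ c, ∀ u ∈ d, S.ht s = S.ht u → s = u) → c ⊆ d := by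
    intro c d hd h s hs
    obtain ⟨u, hu, hus⟩ := hd.2.2 (S.ht s) (ht_lt_omega1 s)
    rwa [h s hs u hu hus.symm]
  exact (sub hd h).antisymm (sub hc fun u hu s hs hus => (h s hs u hu hus.symm).symm)

end IsBranch

/-- `b` is the `R`-greatest branch of `W` above its node `t`: `IsLocalRightEP` and
`IsLocalLeftEP` are `∃ t ∈ b, IsEndAbove R W b t` for `R = lexlt` and its converse. -/
def IsEndAbove (R : S.T → S.T → Prop) (W b : Set S.T) (t : S.T) : Prop :=
  ∀ s ∈ b, S.ht t ≤ S.ht s → ∀ u ∈ W, S.ht u = S.ht s → S.le t u → u = s ∨ R u s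

theorem IsEndAbove.eq {R : S.T → S.T → Prop} (hR : ∀ a b, R a b → ¬ R b a)
    {W c d : Set S.T} (hc : S.IsBranch c) (hd : S.IsBranch d) (hcW : c ⊆ W) (hdW : d ⊆ W)
    {t : S.T} (htc : t ∈ c) (htd : t ∈ d)
    (hec : S.IsEndAbove R W c t) (hed : S.IsEndAbove R W d t) : c = d := by
  refine hc.eq_of_forall_ht_eq hd fun s hs u hu hsu => ?_
  rcases le_total (S.ht s) (S.ht t) with hst | hts
  · exact hc.agree_of_mem hd htc htd _ hst s hs u hu rfl hsu.symm
  · have hut : S.ht t ≤ S.ht u := hsu ▸ hts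
    rcases hec s hs hts u (hdW hu) hsu.symm (hd.le_of_ht_le htd hu hut) with h | h
    · exact h.symm
    rcases hed u hu hut s (hcW hs) hsu (hc.le_of_ht_le htc hs hts) with h' | h'
    · exact h'
    · exact absurd h (hR _ _ h')

theorem mk_setOf_exists_isEndAbove_le {R : S.T → S.T → Prop} (hR : ∀ a b, R a b → ¬ R b a)
    (W : Set S.T) :
    #{c : Set S.T | S.IsBranch c ∧ c ⊆ W ∧ ∃ t ∈ c, S.IsEndAbove R W c t} ≤ #S.T := by
  choose t htc hte using fun c : {c : Set S.T | S.IsBranch c ∧ c ⊆ W ∧ ∃ t ∈ c,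
    S.IsEndAbove R W c t} => c.2.2.2
  refine mk_le_of_injective (f := t) fun c d hcd => Subtype.ext ?_
  have htd := htc d
  have hed := hte d
  rw [← hcd] at htd hed
  exact IsEndAbove.eq hR c.2.1 d.2.1 c.2.2.1 d.2.2.1 (htc c) htd (hte c) hed

theorem mk_setOf_isLocalEP_lt (W : Set S.T) :
    #{c : Set S.T | S.IsBranch c ∧ c ⊆ W ∧ S.IsLocalEP W c} < aleph 2 := by
  have hsub : {c : Set S.T | S.IsBranch c ∧ c ⊆ W ∧ S.IsLocalEP W c} ⊆
      {c | S.IsBranch c ∧ c ⊆ W ∧ ∃ t ∈ c, S.IsEndAbove S.lexlt W c t} ∪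
        {c | S.IsBranch c ∧ c ⊆ W ∧ ∃ t ∈ c, S.IsEndAbove (fun u s => S.lexlt s u) W c t} := by
    rintro c ⟨hc, hcW, hr | hl⟩
    exacts [Or.inl ⟨hc, hcW, hr⟩, Or.inr ⟨hc, hcW, hl⟩]
  calc _ ≤ #S.T + #S.T :=
        (mk_le_mk_of_subset hsub).trans ((mk_union_le _ _).trans (add_le_add
          (mk_setOf_exists_isEndAbove_le S.lexlt_asymm W)
          (mk_setOf_exists_isEndAbove_le (fun a b h h' => S.lexlt_asymm a b h' h) W)))
    _ ≤ aleph 1 := add_le_of_le (aleph0_le_aleph 1) mk_T_le_aleph_one mk_T_le_aleph_one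
    _ < aleph 2 := aleph_lt_aleph.mpr one_lt_two

theorem exists_mem_not_isLocalEP {L : Set (Set S.T)} (hL : ∀ c ∈ L, S.IsBranch c)
    {u : S.T} (hbig : aleph 2 ≤ #{c : Set S.T | c ∈ L ∧ u ∈ c}) :
    ∃ c ∈ L, u ∈ c ∧ ¬ S.IsLocalEP {t : S.T | ∃ c ∈ L, t ∈ c} c := by
  by_contra! hEP
  refine (hbig.trans (mk_le_mk_of_subset ?_)).not_gt
    (mk_setOf_isLocalEP_lt {t : S.T | ∃ c ∈ L, t ∈ c})
  exact fun c ⟨hcL, huc⟩ => ⟨hL c hcL, fun t htc => ⟨c, hcL, htc⟩, hEP c hcL huc⟩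

theorem exists_lexlt_of_not_isLocalRightEP {W b : Set S.T} (h : ¬ S.IsLocalRightEP W b)
    {t : S.T} (ht : t ∈ b) : ∃ s ∈ b, ∃ u ∈ W, S.le t u ∧ S.lexlt s u := by
  simp only [IsLocalRightEP, not_exists, not_and, not_forall, not_or] at h
  obtain ⟨s, hs, -, u, hu, hus, htu, hne, hnlex⟩ := h t ht
  exact ⟨s, hs, u, hu, htu, (S.lexlt_tricho u s hus hne).resolve_left hnlex⟩

theorem exists_lexlt_of_not_isLocalLeftEP {W b : Set S.T} (h : ¬ S.IsLocalLeftEP W b)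
    {t : S.T} (ht : t ∈ b) : ∃ s ∈ b, ∃ u ∈ W, S.le t u ∧ S.lexlt u s := by
  simp only [IsLocalLeftEP, not_exists, not_and, not_forall, not_or] at h
  obtain ⟨s, hs, -, u, hu, hus, htu, hne, hnlex⟩ := h t ht
  exact ⟨s, hs, u, hu, htu, (S.lexlt_tricho u s hus hne).resolve_right hnlex⟩

end LexOmega1Tree

open LexOmega1Tree in
/-- Let `L ⊆ 𝓑(T)` and `U = ⋃L`, and assume every `t ∈ U` lies on at least
`ℵ₂`-many branches from `L`. If `b ∈ L` is not a local end point of `U`, then for every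
`α < ω₁` there are `b₀, b₁ ∈ L`, neither a local end point of `U`, with
`b₀ <lex b <lex b₁`, `Δ(b₀,b) > α` and `Δ(b₁,b) > α` (i.e. both agree with `b` on all
levels `≤ α`). -/
theorem stmt12 (S : LexOmega1Tree) (L : Set (Set S.T)) (hL : ∀ b ∈ L, S.IsBranch b)
    (hbig : ∀ t ∈ {t : S.T | ∃ c ∈ L, t ∈ c},
      Cardinal.aleph 2 ≤ #{c : Set S.T | c ∈ L ∧ t ∈ c})
    (b : Set S.T) (hb : b ∈ L)
    (hnl : ¬ S.IsLocalEP {t : S.T | ∃ c ∈ L, t ∈ c} b)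
    (α : Ordinal) (hα : α < omega1) :
    ∃ b₀ ∈ L, ∃ b₁ ∈ L,
      ¬ S.IsLocalEP {t : S.T | ∃ c ∈ L, t ∈ c} b₀ ∧
      ¬ S.IsLocalEP {t : S.T | ∃ c ∈ L, t ∈ c} b₁ ∧
      S.blex b₀ b ∧ S.blex b b₁ ∧
      (∀ β : Ordinal, β ≤ α → ∀ s ∈ b₀, ∀ u ∈ b, S.ht s = β → S.ht u = β → s = u) ∧
      (∀ β : Ordinal, β ≤ α → ∀ s ∈ b₁, ∀ u ∈ b, S.ht s = β → S.ht u = β → s = u) := by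
  obtain ⟨t, htb, rfl⟩ := (hL b hb).2.2 α hα
  obtain ⟨s₁, hs₁, u₁, hu₁, htu₁, hlex₁⟩ :=
    exists_lexlt_of_not_isLocalRightEP (fun h => hnl (Or.inl h)) htb
  obtain ⟨s₀, hs₀, u₀, hu₀, htu₀, hlex₀⟩ :=
    exists_lexlt_of_not_isLocalLeftEP (fun h => hnl (Or.inr h)) htb
  obtain ⟨b₁, hb₁, hub₁, hnl₁⟩ := exists_mem_not_isLocalEP hL (hbig u₁ hu₁)
  obtain ⟨b₀, hb₀, hub₀, hnl₀⟩ := exists_mem_not_isLocalEP hL (hbig u₀ hu₀)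
  refine ⟨b₀, hb₀, b₁, hb₁, hnl₀, hnl₁, ⟨u₀, hub₀, s₀, hs₀, hlex₀⟩, ⟨s₁, hs₁, u₁, hub₁, hlex₁⟩,
    ?_, ?_⟩
  · exact (hL b₀ hb₀).agree_of_mem (hL b hb) ((hL b₀ hb₀).mem_of_le htu₀ hub₀) htb
  · exact (hL b₁ hb₁).agree_of_mem (hL b hb) ((hL b₁ hb₁).mem_of_le htu₁ hub₁) htb
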